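/- The serial-dictatorship matching mechanism is strategyproof for receivers: for any receiver, reporting a preference list other than its true preference list never yields an assigned donor that is strictly preferred (under the true preferences) to the donor assigned when reporting truthfully. -/

import Mathlib

/-! Receivers before `k` never look at `k`'s report, so `k` faces the same set of still-available
donors whatever it reports, and the truthful list picks the best of them. -/

variable {D : Type} [DecidableEq D]

/-- Donors already used up after the first `i` receivers of the serial
dictatorship have been processed (receiver `i` picks the first donor on its
reported preference list `P i` that is still available). -/
def sdUsed (P : ℕ → List D) : ℕ → Finset D
  | 0 => ∅
  | i + 1 =>
      sdUsed P i ∪ ((P i).find? fun d => decide (d ∉ sdUsed P i)).toFinset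

/-- The donor assigned to receiver `i` by serial dictatorship (if any). -/
def sdMatch (P : ℕ → List D) (i : ℕ) : Option D :=
  (P i).find? fun d => decide (d ∉ sdUsed P i)

/-- Rank of an outcome under the true preference list `l`: position in the
list for a matched eligible donor; `l.length` (worst) for being unmatched (or
matched to a donor not on the list). Smaller rank = better. -/
def outcomeRank (l : List D) : Option D → ℕ
  | none => l.length
  | some d => l.idxOf d

theorem List.idxOf_le_of_find?_eq_some {p : D → Bool} {l : List D} {a b : D}
    (ha : l.find? p = some a) (hb : b ∈ l) (hpb : p b) : l.idxOf a ≤ l.idxOf b := by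
  induction l with
  | nil => simp at hb
  | cons c l ih =>
    by_cases hpc : p c
    · rw [List.find?_cons_of_pos hpc] at ha
      cases ha
      simp
    · rw [List.find?_cons_of_neg hpc] at ha
      have hac : c ≠ a := by rintro rfl; exact hpc (List.find?_some ha)
      have hbc : c ≠ b := by rintro rfl; exact hpc hpb
      rw [List.idxOf_cons_ne _ hac, List.idxOf_cons_ne _ hbc]
      exact Nat.succ_le_succ (ih ha (List.mem_of_ne_of_mem hbc.symm hb))

theorem outcomeRank_le_length (l : List D) (o : Option D) : outcomeRank l o ≤ l.length := by
  cases o with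
  | none => exact le_rfl
  | some d => exact List.idxOf_le_length

theorem outcomeRank_find?_le (l : List D) (p : D → Bool) {o : Option D}
    (ho : ∀ d ∈ o, p d) : outcomeRank l (l.find? p) ≤ outcomeRank l o := by
  cases o with
  | none => exact outcomeRank_le_length l _
  | some d =>
    by_cases hd : d ∈ l
    · cases ha : l.find? p with
      | none => exact absurd (ho d rfl) (List.find?_eq_none.mp ha d hd)
      | some a => exact List.idxOf_le_of_find?_eq_some ha hd (ho d rfl)
    · rw [show outcomeRank l (some d) = l.length from List.idxOf_eq_length_iff.mpr hd]
      exact outcomeRank_le_length l _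

theorem sdUsed_update_of_le (P : ℕ → List D) {k i : ℕ} (Q : List D) (hi : i ≤ k) :
    sdUsed (Function.update P k Q) i = sdUsed P i := by
  induction i with
  | zero => rfl
  | succ i ih =>
    simp only [sdUsed, ih (Nat.le_of_succ_le hi), Function.update_of_ne (Nat.ne_of_lt hi)]

theorem sdMatch_update_self (P : ℕ → List D) (k : ℕ) (Q : List D) :
    sdMatch (Function.update P k Q) k = Q.find? fun d => decide (d ∉ sdUsed P k) := by
  simp only [sdMatch, sdUsed_update_of_le P Q le_rfl, Function.update_self]

theorem serial_dictatorship_strategyproof_general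
    (P : ℕ → List D)
    (k : ℕ) (Q : List D) :
    ¬ outcomeRank (P k) (sdMatch (Function.update P k Q) k) <
        outcomeRank (P k) (sdMatch P k) := by
  rw [sdMatch_update_self, not_lt]
  exact outcomeRank_find?_le (P k) _ fun _ hd =>
    List.find?_some (p := fun d => decide (d ∉ sdUsed P k)) hd

/-- Serial dictatorship is strategyproof for receivers: receiver
`k` reporting some list `Q` instead of its true list `P k` never obtains a
donor strictly preferred (under `P k`) to the one obtained by truth-telling. -/
theorem serial_dictatorship_strategyproof
    (P : ℕ → List D) (hnodup : ∀ i, (P i).Nodup)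
    (k : ℕ) (Q : List D) (hQ : Q.Nodup) :
    ¬ outcomeRank (P k) (sdMatch (Function.update P k Q) k) <
        outcomeRank (P k) (sdMatch P k) :=
  serial_dictatorship_strategyproof_general P k Q
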